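/- arXiv:1003.0918 — 3 statements merged into one kernel-verified Lean document; each statement's English description precedes it below -/
import Mathlib

section
/- Assume the σ-ideal I is c.c.c. Let 𝒜 ⊆ I be a point-finite family such that ⋃𝒜 ∉ I and such that the algebra P(𝒜)/ℐ is not c.c.c., where ℐ is the ideal of subfamilies of 𝒜 induced by I. Then there exist subfamilies {𝒜_α : α < ω₁} of 𝒜 and a Borel set H such that: (1) ⋃𝒜_α ∉ I for every α < ω₁; (2) 𝒜_α ∩ 𝒜_β = ∅ for all α < β < ω₁; (3) H is an I-hull of ⋃𝒜_α for every α < ω₁ (so all the unions have equal I-hulls). -/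
open MeasureTheory Set Pointwise

/-- `B` is a Borel subset of `X`. -/
def IsBorel {X : Type} [TopologicalSpace X] (B : Set X) : Prop :=
  MeasurableSet[borel X] B

/-- `I` is a σ-ideal of subsets of `X` (closed under subsets and countable unions),
containing all singletons, with a Borel base. -/
def IsNiceIdeal {X : Type} [TopologicalSpace X] (I : Set (Set X)) : Prop :=
  (∀ A B : Set X, A ⊆ B → B ∈ I → A ∈ I) ∧
  (∀ f : ℕ → Set X, (∀ n, f n ∈ I) → (⋃ n, f n) ∈ I) ∧
  (∀ x : X, ({x} : Set X) ∈ I) ∧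
  (∀ A ∈ I, ∃ B ∈ I, IsBorel B ∧ A ⊆ B)

/-- `I` is c.c.c.: every family of Borel sets not in `I` whose pairwise intersections
(between distinct members) lie in `I` is at most countable. -/
def IdealCCC {X : Type} [TopologicalSpace X] (I : Set (Set X)) : Prop :=
  ∀ 𝒜 : Set (Set X), (∀ A ∈ 𝒜, IsBorel A ∧ A ∉ I) →
    (∀ A ∈ 𝒜, ∀ B ∈ 𝒜, A ≠ B → A ∩ B ∈ I) → 𝒜.Countable

/-- A family of sets is point-finite iff each point belongs to only finitely many members. -/
def PointFiniteFam {X : Type} (𝒜 : Set (Set X)) : Prop :=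
  ∀ x : X, {A ∈ 𝒜 | x ∈ A}.Finite

/-- A Borel set `H` is an `I`-hull of `D`. -/
def IsHull {X : Type} [TopologicalSpace X] (I : Set (Set X)) (H D : Set X) : Prop :=
  IsBorel H ∧ D \ H ∈ I ∧ ∀ C : Set X, IsBorel C → D \ C ∈ I → H \ C ∈ I

/-- The algebra `P(𝒜)/ℐ` is c.c.c., where `𝒳 ∈ ℐ ↔ ⋃𝒳 ∈ I`: every family `W` of
subfamilies of `𝒜` with `⋃a ∉ I` for `a ∈ W` and `⋃(a ∩ b) ∈ I` for distinct
`a, b ∈ W` is at most countable. -/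
def AlgCCC {X : Type} [TopologicalSpace X] (I : Set (Set X)) (𝒜 : Set (Set X)) : Prop :=
  ∀ W : Set (Set (Set X)), (∀ a ∈ W, a ⊆ 𝒜) → (∀ a ∈ W, ⋃₀ a ∉ I) →
    (∀ a ∈ W, ∀ b ∈ W, a ≠ b → ⋃₀ (a ∩ b) ∈ I) → W.Countable

/-- An index set of size `ω₁` (the first uncountable cardinal). -/
def Omega1 : Type := Quotient.out (Cardinal.aleph 1 : Cardinal.{0})

/-!
Index an uncountable antichain of `P(𝒜)/ℐ` by `ω₁` and make its members disjoint by removing the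
earlier ones. Under c.c.c. every family of Borel sets is covered modulo `I` by a countable
subfamily; this yields hulls, and for every `γ` a countable set `S γ` of indices `≥ γ` whose hulls
cover the tail from `γ` on. These tail hulls decrease modulo `I` along `ω₁`, so by c.c.c. they are
eventually constant, and restricting `γ` to the closure points of `γ ↦ sup S γ` makes the sets
`S γ` pairwise disjoint.
-/

open Function

namespace IsNiceIdeal

variable {X : Type} [TopologicalSpace X] {I : Set (Set X)}

theorem mono (hI : IsNiceIdeal I) {A B : Set X} (h : A ⊆ B) (hB : B ∈ I) : A ∈ I :=
  hI.1 A B h hB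

theorem empty_mem [Nonempty X] (hI : IsNiceIdeal I) : (∅ : Set X) ∈ I :=
  hI.mono (empty_subset _) (hI.2.2.1 (Classical.arbitrary X))

theorem iUnion_mem [Nonempty X] (hI : IsNiceIdeal I) {ι : Type*} [Countable ι] {f : ι → Set X}
    (h : ∀ i, f i ∈ I) : (⋃ i, f i) ∈ I := by
  cases isEmpty_or_nonempty ι
  · simpa using hI.empty_mem
  · obtain ⟨g, hg⟩ := exists_surjective_nat ι
    rw [← hg.iUnion_comp]
    exact hI.2.1 _ fun n => h (g n)

theorem biUnion_mem [Nonempty X] (hI : IsNiceIdeal I) {ι : Type*} {s : Set ι} (hs : s.Countable)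
    {f : ι → Set X} (h : ∀ i ∈ s, f i ∈ I) : (⋃ i ∈ s, f i) ∈ I := by
  have := hs.to_subtype
  rw [biUnion_eq_iUnion]
  exact hI.iUnion_mem fun i => h i i.2

theorem union_mem [Nonempty X] (hI : IsNiceIdeal I) {A B : Set X} (hA : A ∈ I) (hB : B ∈ I) :
    A ∪ B ∈ I := by
  rw [union_eq_iUnion]
  exact hI.iUnion_mem (Bool.forall_bool.2 ⟨hB, hA⟩)

theorem mem_of_diff_mem [Nonempty X] (hI : IsNiceIdeal I) {A B : Set X} (hAB : A \ B ∈ I)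
    (hB : B ∈ I) : A ∈ I :=
  hI.mono (subset_sdiff_union A B) (hI.union_mem hAB hB)

theorem diff_mem_trans [Nonempty X] (hI : IsNiceIdeal I) {A B C : Set X} (hAB : A \ B ∈ I)
    (hBC : B \ C ∈ I) : A \ C ∈ I :=
  hI.mono (sdiff_triangle A B C) (hI.union_mem hAB hBC)

end IsNiceIdeal

namespace IsBorel

variable {X : Type} [TopologicalSpace X] {A B : Set X}

theorem diff (hA : IsBorel A) (hB : IsBorel B) : IsBorel (A \ B) :=
  MeasurableSet.diff hA hB

theorem compl (hA : IsBorel A) : IsBorel Aᶜ :=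
  MeasurableSet.compl hA

theorem biUnion {ι : Type*} {s : Set ι} (hs : s.Countable) {f : ι → Set X}
    (h : ∀ i ∈ s, IsBorel (f i)) : IsBorel (⋃ i ∈ s, f i) :=
  MeasurableSet.biUnion hs h

theorem sUnion {𝒮 : Set (Set X)} (h𝒮 : 𝒮.Countable) (h : ∀ A ∈ 𝒮, IsBorel A) : IsBorel (⋃₀ 𝒮) :=
  MeasurableSet.sUnion h𝒮 h

end IsBorel

namespace IsHull

variable {X : Type} [TopologicalSpace X] [Nonempty X] {I : Set (Set X)}

theorem congr (hI : IsNiceIdeal I) {H H' D : Set X} (hH : IsHull I H D) (hH' : IsBorel H')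
    (h₁ : H \ H' ∈ I) (h₂ : H' \ H ∈ I) : IsHull I H' D :=
  ⟨hH', hI.diff_mem_trans hH.2.1 h₁, fun C hC hDC => hI.diff_mem_trans h₂ (hH.2.2 C hC hDC)⟩

theorem biUnion (hI : IsNiceIdeal I) {ι : Type*} {s : Set ι} (hs : s.Countable)
    {H D : ι → Set X} (h : ∀ i ∈ s, IsHull I (H i) (D i)) :
    IsHull I (⋃ i ∈ s, H i) (⋃ i ∈ s, D i) := by
  refine ⟨IsBorel.biUnion hs fun i hi => (h i hi).1, ?_, fun C hC hDC => ?_⟩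
  · refine hI.mono ?_ (hI.biUnion_mem hs fun i hi => (h i hi).2.1)
    rintro x ⟨hxD, hxH⟩
    obtain ⟨i, hi, hxi⟩ := mem_iUnion₂.1 hxD
    exact mem_iUnion₂.2 ⟨i, hi, hxi, fun hx => hxH (mem_iUnion₂.2 ⟨i, hi, hx⟩)⟩
  · simp only [iUnion_sdiff]
    exact hI.biUnion_mem hs fun i hi =>
      (h i hi).2.2 C hC (hI.mono (sdiff_subset_sdiff_left (subset_biUnion_of_mem hi)) hDC)

end IsHull

namespace IdealCCC

variable {X : Type} [TopologicalSpace X] [Nonempty X] {I : Set (Set X)}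

/-- `M` is a maximal `I`-almost disjoint family of `I`-positive members of `P`. -/
theorem exists_countable_diff_sUnion_mem (hccc : IdealCCC I) (hI : IsNiceIdeal I)
    {P : Set (Set X)} (hP : ∀ B ∈ P, IsBorel B)
    (hP_sub : ∀ B ∈ P, ∀ C, IsBorel C → C ⊆ B → C ∈ P) :
    ∃ M ⊆ P, M.Countable ∧ ∀ B ∈ P, B \ ⋃₀ M ∈ I := by
  obtain ⟨M, ⟨hMP, hM_ae⟩, hM_max⟩ :=
    zorn_subset {M | M ⊆ P \ I ∧ M.Pairwise fun A B => A ∩ B ∈ I} fun c hc hchain =>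
      ⟨⋃₀ c, ⟨sUnion_subset fun M hM => (hc hM).1,
        (pairwise_sUnion hchain.directedOn).2 fun M hM => (hc hM).2⟩,
        fun _ => subset_sUnion_of_mem⟩
  have hMc : M.Countable := hccc M (fun A hA => ⟨hP A (hMP hA).1, (hMP hA).2⟩) hM_ae
  refine ⟨M, fun A hA => (hMP hA).1, hMc, fun B hB => ?_⟩
  by_contra hpos
  set C := B \ ⋃₀ M
  have hC_P : C ∈ P :=
    hP_sub B hB C ((hP B hB).diff (IsBorel.sUnion hMc fun A hA => hP A (hMP hA).1)) sdiff_subset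
  have hC_disj : ∀ A ∈ M, C ∩ A = ∅ := fun A hA =>
    eq_empty_of_forall_notMem fun x hx => hx.1.2 ⟨A, hA, hx.2⟩
  have hC_mem : C ∈ M := by
    refine hM_max ⟨insert_subset ⟨hC_P, hpos⟩ hMP, pairwise_insert.2 ⟨hM_ae, fun A hA _ => ?_⟩⟩
      (subset_insert C M) (mem_insert C M)
    rw [hC_disj A hA, inter_comm, hC_disj A hA]
    exact ⟨hI.empty_mem, hI.empty_mem⟩
  exact hpos (by rw [← inter_self C, hC_disj C hC_mem]; exact hI.empty_mem)

theorem exists_isHull (hccc : IdealCCC I) (hI : IsNiceIdeal I) (D : Set X) :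
    ∃ H, IsHull I H D := by
  obtain ⟨M, hMP, hMc, hM⟩ := hccc.exists_countable_diff_sUnion_mem hI
    (P := {B | IsBorel B ∧ D ∩ B ∈ I}) (fun B hB => hB.1)
    fun B hB C hC hCB => ⟨hC, hI.mono (inter_subset_inter_right D hCB) hB.2⟩
  have hE : IsBorel (⋃₀ M) := IsBorel.sUnion hMc fun B hB => (hMP hB).1
  refine ⟨(⋃₀ M)ᶜ, hE.compl, ?_, fun C hC hDC => ?_⟩
  · rw [sdiff_compl, sUnion_eq_biUnion, inter_iUnion₂]
    exact hI.biUnion_mem hMc fun B hB => (hMP hB).2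
  · have hDC' : D ∩ ((⋃₀ M)ᶜ \ C) ∈ I :=
      hI.mono (by rintro x ⟨hxD, -, hxC⟩; exact ⟨hxD, hxC⟩) hDC
    have := hM _ ⟨hE.compl.diff hC, hDC'⟩
    rwa [sdiff_eq_left.2 (disjoint_compl_left.mono_left sdiff_le)] at this

theorem exists_countable_subfamily (hccc : IdealCCC I) (hI : IsNiceIdeal I) {ι : Type*}
    (s : Set ι) {H : ι → Set X} (hH : ∀ i ∈ s, IsBorel (H i)) :
    ∃ t ⊆ s, t.Countable ∧ ∀ i ∈ s, H i \ ⋃ j ∈ t, H j ∈ I := by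
  obtain ⟨M, hMP, hMc, hM⟩ := hccc.exists_countable_diff_sUnion_mem hI
    (P := {B | IsBorel B ∧ ∃ i ∈ s, B ⊆ H i}) (fun B hB => hB.1)
    fun B ⟨_, i, hi, hBi⟩ C hC hCB => ⟨hC, i, hi, hCB.trans hBi⟩
  have := hMc.to_subtype
  choose w hws hw using fun B : M => (hMP B.2).2
  refine ⟨range w, range_subset_iff.2 hws, countable_range w, fun i hi => ?_⟩
  refine hI.mono (sdiff_subset_sdiff_right ?_) (hM (H i) ⟨hH i hi, i, hi, subset_rfl⟩)
  exact sUnion_subset fun B hB => (hw ⟨B, hB⟩).trans (subset_biUnion_of_mem (mem_range_self _))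

end IdealCCC

universe u

theorem nonempty_embedding_of_not_countable {κ α : Type u} (hκ : Cardinal.mk κ = Cardinal.aleph 1)
    {s : Set α} (hs : ¬ s.Countable) : Nonempty (κ ↪ s) := by
  rw [← Cardinal.le_def, hκ, Cardinal.aleph_one_le_iff, ← not_le,
    Cardinal.le_aleph0_iff_set_countable]
  exact hs

abbrev Omega1Ord : Type := (Cardinal.aleph.{0} 1).ord.ToType

namespace Omega1Ord

theorem countable_Iio (x : Omega1Ord) : (Iio x).Countable :=
  Cardinal.le_aleph0_iff_set_countable.1 <| Cardinal.lt_aleph_one_iff.1 <| by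
    simpa using Cardinal.mk_Iio_lt x (by simp)

theorem exists_gt_of_countable {s : Set Omega1Ord} (hs : s.Countable) : ∃ b, ∀ x ∈ s, x < b := by
  by_contra! h
  have hcof := Order.cof_le (s := s) h
  rw [Ordinal.cof_toType, Cardinal.isRegular_aleph_one.cof_ord] at hcof
  exact hcof.not_gt (Cardinal.lt_aleph_one_iff.2 (Cardinal.le_aleph0_iff_set_countable.2 hs))

/-- The closure points of `f` are unbounded: iterate `γ ↦ (a bound for γ and f '' Iio γ)`
from `ξ` and take the least strict upper bound of the iterates. -/
theorem exists_uncountable_closedUnder (f : Omega1Ord → Omega1Ord) :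
    ∃ Z : Set Omega1Ord, ¬ Z.Countable ∧ ∀ ξ ∈ Z, ∀ η ∈ Z, ξ < η → f ξ < η := by
  choose M hM using fun γ => exists_gt_of_countable (((countable_Iio γ).image f).insert γ)
  have hM_gt : ∀ γ, γ < M γ := fun γ => hM γ γ (mem_insert γ _)
  have hM_f : ∀ γ, ∀ ζ < γ, f ζ < M γ := fun γ ζ hζ =>
    hM γ (f ζ) (mem_insert_of_mem γ (mem_image_of_mem f hζ))
  have hunbdd : ∀ ξ, ∃ η, ξ < η ∧ ∀ ζ < η, f ζ < η := by
    intro ξ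
    set x : ℕ → Omega1Ord := fun n => M^[n] ξ
    have hx : ∀ n, x (n + 1) = M (x n) := fun n => iterate_succ_apply' M n ξ
    obtain ⟨η, hη, hη_min⟩ := wellFounded_lt.has_min {b | ∀ n, x n < b}
      (exists_gt_of_countable (countable_range x) |>.imp fun b hb n => hb _ (mem_range_self n))
    refine ⟨η, hη 0, fun ζ hζ => ?_⟩
    obtain ⟨n, hn⟩ : ∃ n, ζ ≤ x n := by
      by_contra! h
      exact hη_min ζ h hζ
    calc f ζ < M (x (n + 1)) := hM_f _ ζ (hn.trans_lt (hx n ▸ hM_gt (x n)))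
      _ = x (n + 2) := (hx (n + 1)).symm
      _ < η := hη (n + 2)
  refine ⟨{η | ∀ ζ < η, f ζ < η}, fun hZ => ?_, fun ξ _ η hη hξη => hη ξ hξη⟩
  obtain ⟨b, hb⟩ := exists_gt_of_countable hZ
  obtain ⟨η, hbη, hη⟩ := hunbdd b
  exact (hb η hη).not_gt hbη

theorem exists_uncountable_pairwiseDisjoint {T : Omega1Ord → Set Omega1Ord}
    (hT : ∀ γ, (T γ).Countable) (hT_ge : ∀ γ, T γ ⊆ Ici γ) (ξ : Omega1Ord) :
    ∃ Z ⊆ Ici ξ, ¬ Z.Countable ∧ Z.PairwiseDisjoint T := by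
  choose m hm using fun γ => exists_gt_of_countable (hT γ)
  obtain ⟨Z, hZ, hZm⟩ := exists_uncountable_closedUnder m
  have hdisj : ∀ γ ∈ Z, ∀ γ' ∈ Z, γ < γ' → Disjoint (T γ) (T γ') :=
    fun γ hγ γ' hγ' hlt => disjoint_left.2 fun δ hδ hδ' =>
      ((hm γ δ hδ).trans ((hZm γ hγ γ' hγ' hlt).trans_le (hT_ge γ' hδ'))).false
  refine ⟨Z ∩ Ici ξ, inter_subset_right, fun h => hZ ((h.union (countable_Iio ξ)).mono ?_), ?_⟩
  · intro γ hγ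
    by_cases hξγ : ξ ≤ γ
    exacts [Or.inl ⟨hγ, hξγ⟩, Or.inr (not_le.1 hξγ)]
  · intro γ hγ γ' hγ' hne
    rcases hne.lt_or_gt with hlt | hlt
    exacts [hdisj γ hγ.1 γ' hγ'.1 hlt, (hdisj γ' hγ'.1 γ hγ.1 hlt).symm]

end Omega1Ord

namespace IdealCCC

variable {X : Type} [TopologicalSpace X] {I : Set (Set X)}

/-- Otherwise the differences `u ξ \ u (f ξ)` along the closure points of a witness `f` would
form an uncountable antichain. -/
theorem exists_eventually_stable (hccc : IdealCCC I) (hI : IsNiceIdeal I)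
    {u : Omega1Ord → Set X} (hu : ∀ γ, IsBorel (u γ))
    (hanti : ∀ γ γ', γ ≤ γ' → u γ' \ u γ ∈ I) : ∃ ξ, ∀ γ, ξ ≤ γ → u ξ \ u γ ∈ I := by
  by_contra! h
  choose f _ hf using h
  obtain ⟨Z, hZ, hZf⟩ := Omega1Ord.exists_uncountable_closedUnder f
  have hB : ∀ ξ ∈ Z, ∀ η ∈ Z, ξ < η → (u ξ \ u (f ξ)) ∩ (u η \ u (f η)) ∈ I :=
    fun ξ hξ η hη hlt => hI.mono (by rintro x ⟨⟨-, hx⟩, hx', -⟩; exact ⟨hx', hx⟩)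
      (hanti (f ξ) η (hZf ξ hξ η hη hlt).le)
  have hB' : ∀ ξ ∈ Z, ∀ η ∈ Z, ξ ≠ η → (u ξ \ u (f ξ)) ∩ (u η \ u (f η)) ∈ I := by
    intro ξ hξ η hη hne
    rcases hne.lt_or_gt with hlt | hlt
    exacts [hB ξ hξ η hη hlt, inter_comm (u ξ \ u (f ξ)) _ ▸ hB η hη ξ hξ hlt]
  refine hZ (countable_of_injective_of_countable_image (f := fun ξ => u ξ \ u (f ξ)) ?_ ?_)
  · intro ξ hξ η hη heq
    by_contra hne
    exact hf η (by simpa [heq] using hB' ξ hξ η hη hne)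
  · refine hccc _ (forall_mem_image.2 fun ξ _ => ⟨(hu ξ).diff (hu (f ξ)), hf ξ⟩) ?_
    simp only [forall_mem_image]
    exact fun ξ hξ η hη hne => hB' ξ hξ η hη fun h => hne (h ▸ rfl)

theorem exists_countable_tail_cover [Nonempty X] (hccc : IdealCCC I) (hI : IsNiceIdeal I)
    {H : Omega1Ord → Set X} (hH : ∀ β, IsBorel (H β)) (γ : Omega1Ord) :
    ∃ t ⊆ Ici γ, t.Countable ∧ γ ∈ t ∧ ∀ β, γ ≤ β → H β \ ⋃ δ ∈ t, H δ ∈ I := by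
  obtain ⟨t, ht, htc, hcover⟩ := hccc.exists_countable_subfamily hI (Ici γ) fun β _ => hH β
  refine ⟨insert γ t, insert_subset self_mem_Ici ht, htc.insert γ, mem_insert γ t, fun β hβ => ?_⟩
  exact hI.mono (sdiff_subset_sdiff_right (biUnion_subset_biUnion_left (subset_insert γ t)))
    (hcover β hβ)

theorem exists_pairwise_disjoint_common_hull [Nonempty X] (hccc : IdealCCC I)
    (hI : IsNiceIdeal I) (D : Omega1Ord → Set X) :
    ∃ (T : Omega1 → Set Omega1Ord) (H : Set X), (∀ α, (T α).Nonempty) ∧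
      Pairwise (Disjoint on T) ∧ ∀ α, IsHull I H (⋃ δ ∈ T α, D δ) := by
  choose Hd hHd using fun β => hccc.exists_isHull hI (D β)
  choose S hS_ge hSc hγS hS using
    fun γ => hccc.exists_countable_tail_cover hI (fun β => (hHd β).1) γ
  set u : Omega1Ord → Set X := fun γ => ⋃ δ ∈ S γ, Hd δ
  have hu_hull : ∀ γ, IsHull I (u γ) (⋃ δ ∈ S γ, D δ) :=
    fun γ => IsHull.biUnion hI (hSc γ) fun δ _ => hHd δ
  have hu_anti : ∀ γ γ', γ ≤ γ' → u γ' \ u γ ∈ I := fun γ γ' h => by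
    simp only [u, iUnion_sdiff]
    exact hI.biUnion_mem (hSc γ') fun δ hδ => hS γ δ (h.trans (hS_ge γ' hδ))
  obtain ⟨ξ, hξ⟩ := hccc.exists_eventually_stable hI (fun γ => (hu_hull γ).1) hu_anti
  obtain ⟨Z, hZξ, hZ, hZ_disj⟩ := Omega1Ord.exists_uncountable_pairwiseDisjoint hSc hS_ge ξ
  obtain ⟨e⟩ := nonempty_embedding_of_not_countable (κ := Omega1) (Cardinal.mk_out _) hZ
  refine ⟨fun α => S (e α), u ξ, fun α => ⟨_, hγS _⟩,
    fun α β hαβ => hZ_disj (e α).2 (e β).2 fun h => hαβ (e.injective (Subtype.ext h)),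
    fun α => ?_⟩
  have hξα : ξ ≤ e α := hZξ (e α).2
  exact (hu_hull (e α)).congr hI (hu_hull ξ).1 (hu_anti ξ _ hξα) (hξ _ hξα)

end IdealCCC

theorem exists_pairwise_disjoint_of_not_algCCC {X : Type} [TopologicalSpace X] [Nonempty X]
    {I : Set (Set X)} (hI : IsNiceIdeal I) {𝒜 : Set (Set X)} (hnc : ¬ AlgCCC I 𝒜) :
    ∃ F : Omega1Ord → Set (Set X), (∀ β, F β ⊆ 𝒜) ∧ Pairwise (Disjoint on F) ∧
      ∀ β, ⋃₀ F β ∉ I := by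
  simp only [AlgCCC, not_forall, exists_prop] at hnc
  obtain ⟨W, hW𝒜, hW_pos, hW_ae, hW⟩ := hnc
  obtain ⟨e⟩ := nonempty_embedding_of_not_countable (Cardinal.mk_ord_toType _) hW
  set a : Omega1Ord → Set (Set X) := fun β => e β
  have ha_ne : ∀ γ β, γ < β → a β ≠ a γ := fun γ β hγβ h =>
    hγβ.ne' (e.injective (Subtype.ext h))
  set F : Omega1Ord → Set (Set X) := fun β => a β \ ⋃ γ ∈ Iio β, a γ
  have hlost : ∀ β, ⋃₀ a β \ ⋃₀ F β ⊆ ⋃ γ ∈ Iio β, ⋃₀ (a β ∩ a γ) := by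
    rintro β x ⟨⟨A, hA, hxA⟩, hx⟩
    have hA' : A ∈ ⋃ γ ∈ Iio β, a γ := by_contra fun h => hx ⟨A, ⟨hA, h⟩, hxA⟩
    obtain ⟨γ, hγ, hAγ⟩ := mem_iUnion₂.1 hA'
    exact mem_iUnion₂.2 ⟨γ, hγ, A, ⟨hA, hAγ⟩, hxA⟩
  refine ⟨F, fun β => sdiff_subset.trans (hW𝒜 _ (e β).2),
    (pairwise_disjoint_on F).2 fun γ β hγβ =>
      disjoint_left.2 fun A hA hA' => hA'.2 (mem_biUnion hγβ hA.1),
    fun β hβ => hW_pos _ (e β).2 (hI.mem_of_diff_mem (hI.mono (hlost β) ?_) hβ)⟩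
  exact hI.biUnion_mem (Omega1Ord.countable_Iio β) fun γ hγ =>
    hW_ae _ (e β).2 _ (e γ).2 (ha_ne γ β hγ)

theorem otoczka_general {X : Type} [TopologicalSpace X] [Uncountable X]
    (I : Set (Set X)) (hI : IsNiceIdeal I) (hccc : IdealCCC I)
    (𝒜 : Set (Set X)) (hnc : ¬ AlgCCC I 𝒜) :
    ∃ (F : Omega1 → Set (Set X)) (H : Set X),
      (∀ α, F α ⊆ 𝒜) ∧
      (∀ α, ⋃₀ (F α) ∉ I) ∧
      (∀ α β, α ≠ β → F α ∩ F β = ∅) ∧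
      (∀ α, IsHull I H (⋃₀ (F α))) := by
  obtain ⟨F, hF𝒜, hF_disj, hF_pos⟩ := exists_pairwise_disjoint_of_not_algCCC hI hnc
  obtain ⟨T, H, hT_ne, hT_disj, hH⟩ :=
    hccc.exists_pairwise_disjoint_common_hull hI fun β => ⋃₀ F β
  have hU : ∀ α, ⋃₀ (⋃ δ ∈ T α, F δ) = ⋃ δ ∈ T α, ⋃₀ F δ := fun α => by
    simp only [sUnion_iUnion]
  refine ⟨fun α => ⋃ δ ∈ T α, F δ, H, fun α => iUnion₂_subset fun δ _ => hF𝒜 δ,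
    fun α hα => ?_, fun α β hαβ => ?_, fun α => hU α ▸ hH α⟩
  · obtain ⟨δ, hδ⟩ := hT_ne α
    exact hF_pos δ (hI.mono ((subset_biUnion_of_mem hδ).trans (hU α).ge) hα)
  · refine disjoint_iff_inter_eq_empty.1 (disjoint_iUnion₂_left.2 fun δ hδ =>
      disjoint_iUnion₂_right.2 fun δ' hδ' => hF_disj ?_)
    exact (hT_disj hαβ).ne_of_mem hδ hδ'

/-- If `I` is c.c.c., `𝒜 ⊆ I` is point-finite with `⋃𝒜 ∉ I`, and `P(𝒜)/ℐ` is not c.c.c.,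
then there are `ω₁` many pairwise disjoint subfamilies of `𝒜`, each with `I`-positive
union, all of whose unions have the same `I`-hull `H`. -/
theorem otoczka {X : Type} [TopologicalSpace X] [PolishSpace X] [Uncountable X]
    (I : Set (Set X)) (hI : IsNiceIdeal I) (hccc : IdealCCC I)
    (𝒜 : Set (Set X)) (h𝒜 : 𝒜 ⊆ I) (hpf : PointFiniteFam 𝒜)
    (hU : ⋃₀ 𝒜 ∉ I) (hnc : ¬ AlgCCC I 𝒜) :
    ∃ (F : Omega1 → Set (Set X)) (H : Set X),
      (∀ α, F α ⊆ 𝒜) ∧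
      (∀ α, ⋃₀ (F α) ∉ I) ∧
      (∀ α β, α ≠ β → F α ∩ F β = ∅) ∧
      (∀ α, IsHull I H (⋃₀ (F α))) :=
  otoczka_general I hI hccc 𝒜 hnc
end

section
/- Assume the σ-ideal I is c.c.c. Let 𝒜 ⊆ P(X) be any point-finite family of subsets of X. Then there exists a subfamily 𝒜' ⊆ 𝒜 such that 𝒜 \ 𝒜' is at most countable and for every Borel set B ∉ I and every A ∈ 𝒜': if B ∩ ⋃𝒜 ∉ I, then it is not the case that B ∩ ⋃𝒜 ⊆ B ∩ A. -/
open MeasureTheory Set Pointwise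

section Aux
variable {X : Type} [TopologicalSpace X] {I : Set (Set X)}

lemma union_mem_aux (hI : IsNiceIdeal I) {P Q : Set X} (hP : P ∈ I) (hQ : Q ∈ I) :
    P ∪ Q ∈ I := by
  have h := hI.2.1 (fun n => if n = 0 then P else Q) (by intro n; split <;> assumption)
  apply hI.1 _ _ _ h
  intro x hx
  rcases hx with hx | hx
  · exact mem_iUnion.2 ⟨0, by simpa using hx⟩
  · exact mem_iUnion.2 ⟨1, by simpa using hx⟩

lemma empty_mem_aux [Nonempty X] (hI : IsNiceIdeal I) : (∅ : Set X) ∈ I := by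
  obtain ⟨x⟩ := ‹Nonempty X›
  exact hI.1 _ _ (empty_subset _) (hI.2.2.1 x)

/-- Existence of Borel hulls. -/
lemma exists_hull [Nonempty X] (hI : IsNiceIdeal I) (hccc : IdealCCC I) (S : Set X) :
    ∃ H : Set X, IsBorel H ∧ S ⊆ H ∧ ∀ B : Set X, IsBorel B → S ⊆ B → H \ B ∈ I := by
  set cand : Set (Set (Set X)) :=
    {𝒟 | (∀ D ∈ 𝒟, IsBorel D ∧ D ∉ I ∧ D ∩ S = ∅) ∧
      (∀ D ∈ 𝒟, ∀ D' ∈ 𝒟, D ≠ D' → D ∩ D' ∈ I)} with hcand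
  have hzorn : ∀ c ⊆ cand, IsChain (· ⊆ ·) c → ∃ ub ∈ cand, ∀ s ∈ c, s ⊆ ub := by
    intro c hc hchain
    refine ⟨⋃₀ c, ⟨?_, ?_⟩, fun s hs => subset_sUnion_of_mem hs⟩
    · rintro D ⟨𝒟, h𝒟c, hD⟩
      exact (hc h𝒟c).1 D hD
    · rintro D ⟨𝒟, h𝒟c, hD⟩ D' ⟨𝒟', h𝒟'c, hD'⟩ hne
      rcases hchain.total h𝒟c h𝒟'c with h | h
      · exact (hc h𝒟'c).2 D (h hD) D' hD' hne
      · exact (hc h𝒟c).2 D hD D' (h hD') hne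
  obtain ⟨𝒟, h𝒟⟩ := zorn_subset cand hzorn
  · have hmem : 𝒟 ∈ cand := h𝒟.1
    have hcnt : 𝒟.Countable := hccc 𝒟 (fun D hD => ⟨(hmem.1 D hD).1, (hmem.1 D hD).2.1⟩) hmem.2
    refine ⟨(⋃₀ 𝒟)ᶜ, ?_, ?_, ?_⟩
    · exact (MeasurableSet.sUnion hcnt (fun D hD => (hmem.1 D hD).1)).compl
    · intro x hx hx'
      obtain ⟨D, hD, hxD⟩ := hx'
      have hxDS : x ∈ D ∩ S := ⟨hxD, hx⟩
      rw [(hmem.1 D hD).2.2] at hxDS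
      exact hxDS
    · intro B hB hSB
      by_contra hE
      set E := (⋃₀ 𝒟)ᶜ \ B with hEdef
      have hEcand : insert E 𝒟 ∈ cand := by
        constructor
        · rintro D (rfl | hD)
          · refine ⟨((MeasurableSet.sUnion hcnt (fun D hD => (hmem.1 D hD).1)).compl).diff hB,
              hE, ?_⟩
            apply eq_empty_iff_forall_notMem.2
            rintro x ⟨⟨_, hxB⟩, hxS⟩
            exact hxB (hSB hxS)
          · exact hmem.1 D hD
        · have hEdisj : ∀ D ∈ 𝒟, E ∩ D = ∅ := by
            intro D hD
            apply eq_empty_iff_forall_notMem.2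
            rintro x ⟨⟨hx, _⟩, hxD⟩
            exact hx ⟨D, hD, hxD⟩
          rintro D (rfl | hD) D' (rfl | hD') hne
          · exact absurd rfl hne
          · rw [hEdisj D' hD']
            exact empty_mem_aux hI
          · rw [inter_comm, hEdisj D hD]
            exact empty_mem_aux hI
          · exact hmem.2 D hD D' hD' hne
      have hEmem : E ∈ 𝒟 := h𝒟.2 hEcand (subset_insert E 𝒟) (mem_insert E 𝒟)
      have hEempty : E = ∅ := by
        apply eq_empty_iff_forall_notMem.2
        intro x hx
        exact hx.1 ⟨E, hEmem, hx⟩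
      exact hE (hEempty ▸ empty_mem_aux hI)

/-- Trace c.c.c.: Borel sets positive on a fixed set `W`, with pairwise intersections
small on `W`, form a countable family. -/
lemma traceCCC [Nonempty X] (hI : IsNiceIdeal I) (hccc : IdealCCC I) (W : Set X)
    (ℬ : Set (Set X)) (hBor : ∀ B ∈ ℬ, IsBorel B) (hpos : ∀ B ∈ ℬ, B ∩ W ∉ I)
    (hpair : ∀ B ∈ ℬ, ∀ B' ∈ ℬ, B ≠ B' → B ∩ B' ∩ W ∈ I) : ℬ.Countable := by
  have hex := fun S => exists_hull (I := I) hI hccc S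
  choose hull hullBor hullSub hullMin using hex
  set g : Set X → Set X := fun B => hull (B ∩ W) ∩ B with hg
  have hgPos : ∀ B ∈ ℬ, g B ∉ I := by
    intro B hB h
    apply hpos B hB
    apply hI.1 _ _ ?_ h
    intro x hx
    show x ∈ hull (B ∩ W) ∩ B
    exact ⟨hullSub _ hx, hx.1⟩
  have key : ∀ B ∈ ℬ, ∀ B' ∈ ℬ, B ≠ B' → g B ∩ g B' ∈ I := by
    intro B hB B' hB' hne
    have hsmall : hull (B ∩ B' ∩ W) ∈ I := by
      obtain ⟨G, hGI, hGBor, hsubG⟩ := hI.2.2.2 _ (hpair B hB B' hB' hne)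
      exact hI.1 _ _ (fun x hx => by
          by_cases h : x ∈ G
          · exact Or.inr h
          · exact Or.inl ⟨hx, h⟩)
        (union_mem_aux hI (hullMin _ G hGBor hsubG) hGI)
    have hmin : hull (B ∩ W) \ (hull (B ∩ B' ∩ W) ∪ B'ᶜ) ∈ I := by
      apply hullMin (B ∩ W) (hull (B ∩ B' ∩ W) ∪ B'ᶜ)
      · exact (hullBor _).union (hBor B' hB').compl
      · intro x hx
        by_cases h : x ∈ B'
        · exact Or.inl (hullSub _ ⟨⟨hx.1, h⟩, hx.2⟩)
        · exact Or.inr h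
    apply hI.1 _ _ ?_ (union_mem_aux hI hsmall hmin)
    rintro x ⟨⟨hx1, hxB⟩, hx2, hxB'⟩
    by_cases hxh : x ∈ hull (B ∩ B' ∩ W)
    · exact Or.inl hxh
    · exact Or.inr ⟨hx1, fun hmem => hmem.elim hxh (fun hc => hc hxB')⟩
  have himg : (g '' ℬ).Countable := by
    apply hccc (g '' ℬ)
    · rintro C ⟨B, hB, rfl⟩
      exact ⟨(hullBor _).inter (hBor B hB), hgPos B hB⟩
    · rintro C ⟨B, hB, rfl⟩ C' ⟨B', hB', rfl⟩ hne
      have hBne : B ≠ B' := fun h => hne (by rw [h])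
      exact key B hB B' hB' hBne
  have hinj : Set.InjOn g ℬ := by
    intro B hB B' hB' heq
    by_contra hne
    apply hgPos B hB
    apply hI.1 _ _ ?_ (key B hB B' hB' hne)
    intro x hx
    exact ⟨hx, heq ▸ hx⟩
  exact Set.countable_of_injective_of_countable_image hinj himg

/-- Families of Borel sets positive on `W` whose `(k+2)`-wise intersections are
small on `W` are countable. -/
lemma kwiseCCC [Nonempty X] (hI : IsNiceIdeal I) (hccc : IdealCCC I) :
    ∀ (k : ℕ) (W : Set X) (S : Set (Set X)),
    (∀ B ∈ S, IsBorel B) → (∀ B ∈ S, B ∩ W ∉ I) →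
    (∀ T ⊆ S, T.Finite → T.ncard = k + 2 → ⋂₀ T ∩ W ∈ I) → S.Countable := by
  intro k
  induction k with
  | zero =>
    intro W S hBor hpos hmeet
    apply traceCCC hI hccc W S hBor hpos
    intro B hB B' hB' hne
    have h := hmeet {B, B'} (by rintro x (rfl | rfl) <;> assumption) (Set.toFinite _)
      (Set.ncard_pair hne)
    rwa [Set.sInter_pair] at h
  | succ k ih =>
    intro W S hBor hpos hmeet
    set cand : Set (Set (Set X)) :=
      {P | P ⊆ S ∧ ∀ B ∈ P, ∀ B' ∈ P, B ≠ B' → B ∩ B' ∩ W ∈ I} with hcand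
    have hzorn : ∀ c ⊆ cand, IsChain (· ⊆ ·) c → ∃ ub ∈ cand, ∀ s ∈ c, s ⊆ ub := by
      intro c hc hchain
      refine ⟨⋃₀ c, ⟨?_, ?_⟩, fun s hs => subset_sUnion_of_mem hs⟩
      · rintro B ⟨P, hPc, hB⟩
        exact (hc hPc).1 hB
      · rintro B ⟨P, hPc, hB⟩ B' ⟨P', hP'c, hB'⟩ hne
        rcases hchain.total hPc hP'c with h | h
        · exact (hc hP'c).2 B (h hB) B' hB' hne
        · exact (hc hPc).2 B hB B' (h hB') hne
    obtain ⟨P, hP⟩ := zorn_subset cand hzorn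
    have hPsub : P ⊆ S := hP.1.1
    have hPpair := hP.1.2
    have hPcnt : P.Countable := traceCCC hI hccc W P (fun B hB => hBor B (hPsub hB))
      (fun B hB => hpos B (hPsub hB)) hPpair
    have hcover : S ⊆ P ∪ ⋃ B₀ ∈ P, {B ∈ S | B ∉ P ∧ B ∩ B₀ ∩ W ∉ I} := by
      intro B hB
      by_cases hBP : B ∈ P
      · exact Or.inl hBP
      refine Or.inr ?_
      by_contra hnot
      have hins : insert B P ∈ cand := by
        refine ⟨insert_subset hB hPsub, ?_⟩
        rintro C (rfl | hC) C' (rfl | hC') hne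
        · exact absurd rfl hne
        · by_contra hbad
          exact hnot (mem_biUnion hC' ⟨hB, hBP, hbad⟩)
        · by_contra hbad
          refine hnot (mem_biUnion hC ⟨hB, hBP, fun h => hbad ?_⟩)
          apply hI.1 _ _ ?_ h
          intro x hx
          exact ⟨⟨hx.1.2, hx.1.1⟩, hx.2⟩
        · exact hPpair C hC C' hC' hne
      exact hBP (hP.2 hins (subset_insert _ _) (mem_insert _ _))
    apply Set.Countable.mono hcover
    refine hPcnt.union (hPcnt.biUnion ?_)
    intro B₀ hB₀
    apply ih (B₀ ∩ W) _ (fun B hB => hBor B hB.1)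
    · intro B hB h
      apply hB.2.2
      apply hI.1 _ _ ?_ h
      intro x hx
      exact ⟨hx.1.1, hx.1.2, hx.2⟩
    · intro T hT hTfin hTcard
      have hB₀T : B₀ ∉ T := fun h => (hT h).2.1 hB₀
      have h1 : insert B₀ T ⊆ S := insert_subset (hPsub hB₀) (fun B hB => (hT hB).1)
      have h2 : (insert B₀ T).ncard = k + 3 := by
        rw [Set.ncard_insert_of_notMem hB₀T hTfin, hTcard]
      have h3 := hmeet (insert B₀ T) h1 (hTfin.insert _) h2
      rw [Set.sInter_insert] at h3
      apply hI.1 _ _ ?_ h3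
      intro x hx
      exact ⟨⟨hx.2.1, hx.1⟩, hx.2.2⟩

end Aux

/-- If `I` is c.c.c. and `𝒜` is a point-finite family of subsets of `X`, then there is a
subfamily `𝒜' ⊆ 𝒜` with `𝒜 \ 𝒜'` at most countable such that for every Borel `B ∉ I` and
every `A ∈ 𝒜'`: if `B ∩ ⋃𝒜 ∉ I` then `B ∩ ⋃𝒜 ⊄ B ∩ A`. -/
theorem cienki {X : Type} [TopologicalSpace X] [PolishSpace X] [Uncountable X]
    (I : Set (Set X)) (hI : IsNiceIdeal I) (hccc : IdealCCC I)
    (𝒜 : Set (Set X)) (hpf : PointFiniteFam 𝒜) :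
    ∃ 𝒜' ⊆ 𝒜, (𝒜 \ 𝒜').Countable ∧
      ∀ B : Set X, IsBorel B → B ∉ I → ∀ A ∈ 𝒜',
        B ∩ ⋃₀ 𝒜 ∉ I → ¬ (B ∩ ⋃₀ 𝒜 ⊆ B ∩ A) := by
  classical
  have hne : Nonempty X := inferInstance
  set U := ⋃₀ 𝒜 with hU
  set bad := {A ∈ 𝒜 | ∃ B : Set X, IsBorel B ∧ B ∉ I ∧ B ∩ U ∉ I ∧ B ∩ U ⊆ B ∩ A} with hbad
  have hwit : ∀ A ∈ bad, ∃ B : Set X, IsBorel B ∧ B ∩ U ∉ I ∧ B ∩ U ⊆ A := by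
    rintro A ⟨hA𝒜, B, h1, _, h3, h4⟩
    exact ⟨B, h1, h3, fun x hx => (h4 hx).2⟩
  choose! Bw hBw1 hBw2 hBw3 using hwit
  set Uk : ℕ → Set X := fun k => {x | x ∈ U ∧ ({A ∈ 𝒜 | x ∈ A}).ncard ≤ k} with hUk
  have hbadk : ∀ A ∈ bad, ∃ k, Bw A ∩ Uk k ∉ I := by
    intro A hA
    by_contra h
    push_neg at h
    apply hBw2 A hA
    apply hI.1 _ _ ?_ (hI.2.1 (fun k => Bw A ∩ Uk k) h)
    intro x hx
    exact mem_iUnion.2 ⟨({A' ∈ 𝒜 | x ∈ A'}).ncard, hx.1, hx.2, le_rfl⟩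
  set badk : ℕ → Set (Set X) := fun k => {A ∈ bad | Bw A ∩ Uk k ∉ I} with hbadkdef
  have hcnt : ∀ k, (badk k).Countable := by
    intro k
    match k with
    | 0 =>
      have : badk 0 = ∅ := by
        apply eq_empty_iff_forall_notMem.2
        rintro A ⟨hA, hA2⟩
        apply hA2
        have : Bw A ∩ Uk 0 = ∅ := by
          apply eq_empty_iff_forall_notMem.2
          rintro x ⟨_, hxU, hc⟩
          obtain ⟨A₀, hA₀, hxA₀⟩ := hxU
          have hmem : A₀ ∈ {A' ∈ 𝒜 | x ∈ A'} := ⟨hA₀, hxA₀⟩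
          have : ({A' ∈ 𝒜 | x ∈ A'}).ncard = 0 := Nat.le_zero.1 hc
          rw [Set.ncard_eq_zero (hpf x)] at this
          rw [this] at hmem
          exact hmem
        rw [this]
        exact empty_mem_aux hI
      rw [this]
      exact Set.countable_empty
    | k + 1 =>
      have hScnt : (Bw '' badk (k + 1)).Countable := by
        apply kwiseCCC hI hccc k (Uk (k + 1))
        · rintro B ⟨A, hA, rfl⟩
          exact hBw1 A hA.1
        · rintro B ⟨A, hA, rfl⟩
          exact hA.2
        · intro T hT hTfin hTcard
          have hempty : ⋂₀ T ∩ Uk (k + 1) = ∅ := by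
            apply eq_empty_iff_forall_notMem.2
            rintro x ⟨hxT, hxU, hxcard⟩
            have hch : ∀ B ∈ T, ∃ A, A ∈ badk (k + 1) ∧ Bw A = B := by
              intro B hB
              obtain ⟨A, hA, rfl⟩ := hT hB
              exact ⟨A, hA, rfl⟩
            choose! φ hφ1 hφ2 using hch
            have hinj : Set.InjOn φ T := by
              intro B hB B' hB' heq
              rw [← hφ2 B hB, ← hφ2 B' hB', heq]
            have hsub : φ '' T ⊆ {A ∈ 𝒜 | x ∈ A} := by
              rintro _ ⟨B, hB, rfl⟩
              have hAbad : φ B ∈ bad := (hφ1 B hB).1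
              refine ⟨hAbad.1, ?_⟩
              apply hBw3 (φ B) hAbad
              rw [hφ2 B hB]
              exact ⟨hxT B hB, hxU⟩
            have hle := Set.ncard_le_ncard hsub (hpf x)
            rw [Set.ncard_image_of_injOn hinj, hTcard] at hle
            omega
          rw [hempty]
          exact empty_mem_aux hI
      have hfib : ∀ B ∈ Bw '' badk (k + 1), {A ∈ badk (k + 1) | Bw A = B}.Finite := by
        rintro B ⟨A₀, hA₀, rfl⟩
        have hne' : (Bw A₀ ∩ Uk (k + 1)).Nonempty := by
          rcases Set.eq_empty_or_nonempty (Bw A₀ ∩ Uk (k + 1)) with h | h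
          · exact absurd (h ▸ empty_mem_aux hI) hA₀.2
          · exact h
        obtain ⟨x, hxB, hxU, _⟩ := hne'
        apply Set.Finite.subset (hpf x)
        rintro A ⟨hA, hAeq⟩
        refine ⟨hA.1.1, ?_⟩
        apply hBw3 A hA.1
        rw [hAeq]
        exact ⟨hxB, hxU⟩
      have hsubfib : badk (k + 1) ⊆ ⋃ B ∈ Bw '' badk (k + 1), {A ∈ badk (k + 1) | Bw A = B} := by
        intro A hA
        exact mem_biUnion (Set.mem_image_of_mem Bw hA) ⟨hA, rfl⟩
      exact Set.Countable.mono hsubfib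
        (hScnt.biUnion (fun B hB => (hfib B hB).countable))
  have hbadcnt : bad.Countable := by
    have hsub : bad ⊆ ⋃ k, badk k := by
      intro A hA
      obtain ⟨k, hk⟩ := hbadk A hA
      exact mem_iUnion.2 ⟨k, hA, hk⟩
    exact Set.Countable.mono hsub (Set.countable_iUnion hcnt)
  refine ⟨𝒜 \ bad, diff_subset, ?_, ?_⟩
  · apply Set.Countable.mono ?_ hbadcnt
    rintro A ⟨hA1, hA2⟩
    by_contra h
    exact hA2 ⟨hA1, h⟩
  · rintro B hB hBI A ⟨hA𝒜, hAbad⟩ hBU hsubBA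
    exact hAbad ⟨hA𝒜, B, hB, hBI, hBU, hsubBA⟩
end

section
/- Assume cov_h(I) = 2^ω and that 2^ω is a regular cardinal. Let 𝒜 ⊆ I be a cover of X such that each point of X belongs to fewer than continuum many members of 𝒜. Then there exist pairwise disjoint subfamilies {𝒜_α : α < 2^ω} of 𝒜 such that for every α < 2^ω the set ⋃𝒜_α is completely I-nonmeasurable. -/
open MeasureTheory Set Pointwise

/-- `C` is completely `I`-nonmeasurable (in the whole space). -/
def ComplNonmeas {X : Type} [TopologicalSpace X] (I : Set (Set X)) (C : Set X) : Prop :=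
  ∀ B : Set X, IsBorel B → B ∉ I → B ∩ C ∉ I ∧ B ∩ (Set.univ \ C) ∉ I

/-- `cov_h(I)`: the least cardinality of a subfamily of `I` whose union contains
some Borel set not in `I`. -/
noncomputable def covh {X : Type} [TopologicalSpace X] (I : Set (Set X)) : Cardinal.{0} :=
  sInf {c : Cardinal.{0} | ∃ 𝒞 : Set (Set X), 𝒞 ⊆ I ∧
    (∃ B : Set X, IsBorel B ∧ B ∉ I ∧ B ⊆ ⋃₀ 𝒞) ∧ c = Cardinal.mk 𝒞}

/-- An index set of size `2^ω` (the continuum). -/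
def ContIdx : Type := Quotient.out (Cardinal.continuum : Cardinal.{0})

/-- A well-ordered index type of order type (the initial ordinal of) the continuum. -/
abbrev ContW : Type := Ordinal.ToType (Cardinal.ord Cardinal.continuum)

/-- The specification of the choices made at step `γ` of the transfinite construction:
`v = (A, x, y)` where `A ∈ 𝒜`, `x ∈ A ∩ B`, `y ∈ B \ A`, `x` and `y` avoid all previously
chosen sets, and `A` avoids all previously chosen second points. -/
def QSpec {X : Type} (𝒜 : Set (Set X)) (B : Set X) {W : Type} [LT W] (γ : W)
    (g : ∀ δ : W, δ < γ → Set X × X × X) (v : Set X × X × X) : Prop :=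
  v.1 ∈ 𝒜 ∧ v.2.1 ∈ v.1 ∧ v.2.1 ∈ B ∧ v.2.2 ∈ B ∧ v.2.2 ∉ v.1 ∧
  ∀ δ (h : δ < γ), v.2.1 ∉ (g δ h).1 ∧ v.2.2 ∉ (g δ h).1 ∧ (g δ h).2.2 ∉ v.1

/-- Regularity of the continuum transfers down to universe 0. -/
theorem continuum_isRegular_down (h : Cardinal.continuum.{u}.IsRegular) :
    Cardinal.continuum.{0}.IsRegular := by
  refine ⟨Cardinal.aleph0_le_continuum, ?_⟩
  have h2 := h.2
  rw [← Cardinal.lift_continuum.{u,0}, ← Cardinal.lift_ord, ← Ordinal.lift_cof] at h2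
  exact Cardinal.lift_le.mp h2

open Cardinal in
/-- If `cov_h(I) = 2^ω` is regular and `𝒜 ⊆ I` covers `X` with each point in fewer than
continuum many members of `𝒜`, then there are continuum many pairwise disjoint
subfamilies of `𝒜`, each with completely `I`-nonmeasurable union. -/
theorem prop_regular {X : Type} [TopologicalSpace X] [PolishSpace X] [Uncountable X]
    (I : Set (Set X)) (hI : IsNiceIdeal I)
    (hcov : covh I = Cardinal.continuum) (hreg : Cardinal.continuum.IsRegular)
    (𝒜 : Set (Set X)) (h𝒜 : 𝒜 ⊆ I) (hc : ⋃₀ 𝒜 = Set.univ)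
    (hsmall : ∀ x : X, Cardinal.mk {A ∈ 𝒜 | x ∈ A} < Cardinal.continuum) :
    ∃ F : ContIdx → Set (Set X),
      (∀ α, F α ⊆ 𝒜) ∧
      (∀ α β, α ≠ β → Disjoint (F α) (F β)) ∧
      (∀ α, ComplNonmeas I (⋃₀ (F α))) := by
  classical
  have hreg0 : Cardinal.continuum.{0}.IsRegular := continuum_isRegular_down hreg
  obtain ⟨hmono, hcountable, hsingle, hbase⟩ := hI
  haveI hNX : Nonempty X := by
    by_contra h
    rw [not_nonempty_iff] at h
    exact not_countable (α := X) inferInstance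
  -- binary union closure
  have hunion2 : ∀ S T : Set X, S ∈ I → T ∈ I → S ∪ T ∈ I := by
    intro S T hS hT
    have h1 : (⋃ n : ℕ, (if n = 0 then S else T)) ∈ I := by
      refine hcountable _ fun n => ?_
      by_cases h : n = 0
      · rw [if_pos h]; exact hS
      · rw [if_neg h]; exact hT
    refine hmono _ _ (fun z hz => ?_) h1
    rcases hz with hz | hz
    · exact mem_iUnion.mpr ⟨0, by simpa using hz⟩
    · exact mem_iUnion.mpr ⟨1, by simpa using hz⟩
  -- key consequence of `cov_h(I) = continuum`
  have hkey : ∀ 𝒞 : Set (Set X), 𝒞 ⊆ I → #↥𝒞 < Cardinal.continuum →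
      ∀ B : Set X, IsBorel B → B ∉ I → ∃ z, z ∈ B ∧ z ∉ ⋃₀ 𝒞 := by
    intro 𝒞 hsub hlt B hBb hBI
    by_contra hcon
    push_neg at hcon
    have hmem : #↥𝒞 ∈ {c : Cardinal.{0} | ∃ 𝒞' : Set (Set X), 𝒞' ⊆ I ∧
        (∃ B : Set X, IsBorel B ∧ B ∉ I ∧ B ⊆ ⋃₀ 𝒞') ∧ c = Cardinal.mk 𝒞'} :=
      ⟨𝒞, hsub, ⟨B, hBb, hBI, fun z hz => hcon z hz⟩, rfl⟩
    have hle : covh I ≤ #↥𝒞 := csInf_le' hmem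
    rw [hcov] at hle
    exact absurd (lt_of_le_of_lt hle hlt) (lt_irrefl _)
  -- shrinking a Borel non-ideal set off an ideal set
  have hshrink : ∀ B S : Set X, IsBorel B → B ∉ I → S ∈ I →
      ∃ B', IsBorel B' ∧ B' ∉ I ∧ B' ⊆ B ∧ ∀ z ∈ B', z ∉ S := by
    intro B S hBb hBI hSI
    obtain ⟨D, hDI, hDb, hSD⟩ := hbase S hSI
    refine ⟨B \ D, MeasurableSet.diff hBb hDb, ?_, diff_subset, fun z hz hzS => hz.2 (hSD hzS)⟩
    intro hBD
    apply hBI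
    refine hmono B ((B \ D) ∪ D) (fun z hz => ?_) (hunion2 _ _ hBD hDI)
    by_cases h : z ∈ D
    · exact Or.inr h
    · exact Or.inl ⟨hz, h⟩
  -- the family of Borel sets not in `I`
  set ℬ : Set (Set X) := {B : Set X | IsBorel B ∧ B ∉ I} with hℬdef
  have hℬcard : #↥ℬ ≤ Cardinal.continuum := by
    obtain ⟨b, hbc, -, hb⟩ := TopologicalSpace.exists_countable_basis X
    have hbor : borel X = MeasurableSpace.generateFrom b := hb.borel_eq_generateFrom
    have hble : #↥b ≤ Cardinal.continuum := by
      haveI := hbc.to_subtype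
      exact Cardinal.mk_le_aleph0.trans aleph0_le_continuum
    have h1 := MeasurableSpace.cardinal_measurableSet_le_continuum hble
    refine le_trans (mk_le_mk_of_subset ?_) h1
    intro B hB
    exact (show MeasurableSet[MeasurableSpace.generateFrom b] B from hbor ▸ hB.1)
  have hℬne : ℬ.Nonempty := by
    by_contra h
    rw [not_nonempty_iff_eq_empty] at h
    have hempty : {c : Cardinal.{0} | ∃ 𝒞 : Set (Set X), 𝒞 ⊆ I ∧
        (∃ B : Set X, IsBorel B ∧ B ∉ I ∧ B ⊆ ⋃₀ 𝒞) ∧ c = Cardinal.mk 𝒞} = ∅ := by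
      refine eq_empty_iff_forall_notMem.mpr ?_
      rintro c ⟨𝒞, -, ⟨B, hB1, hB2, -⟩, -⟩
      exact absurd (show B ∈ ℬ from ⟨hB1, hB2⟩) (by rw [h]; exact notMem_empty B)
    have : covh I = (0 : Cardinal) := by
      unfold covh
      rw [hempty, Cardinal.sInf_empty]
    rw [this] at hcov
    exact Cardinal.continuum_ne_zero hcov.symm
  -- index sets
  have hCI : #ContIdx = Cardinal.continuum := Cardinal.mk_out Cardinal.continuum
  haveI hCIne : Nonempty ContIdx :=
    Cardinal.mk_ne_zero_iff.mp (by rw [hCI]; exact Cardinal.continuum_ne_zero)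
  haveI hTne : Nonempty (↥ℬ × ContIdx) :=
    ⟨(⟨hℬne.choose, hℬne.choose_spec⟩, Classical.arbitrary ContIdx)⟩
  have hTle : #(↥ℬ × ContIdx) ≤ #ContW := by
    rw [Cardinal.mk_ord_toType]
    calc #(↥ℬ × ContIdx) = #↥ℬ * #ContIdx := by
          rw [Cardinal.mk_prod, Cardinal.lift_id, Cardinal.lift_id]
      _ ≤ Cardinal.continuum * Cardinal.continuum := mul_le_mul' hℬcard (le_of_eq hCI)
      _ = Cardinal.continuum := Cardinal.mul_eq_self aleph0_le_continuum
  obtain ⟨e⟩ := Cardinal.le_def _ _ |>.mp hTle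
  set p : ContW → ↥ℬ × ContIdx := Function.invFun e with hpdef
  have hpsurj : Function.Surjective p := Function.invFun_surjective e.injective
  -- transfinite construction
  have wf : WellFounded ((· < ·) : ContW → ContW → Prop) := wellFounded_lt
  haveI : Nonempty (Set X × X × X) := inferInstance
  set f : ContW → Set X × X × X :=
    wf.fix (fun γ ih => Classical.epsilon (QSpec 𝒜 (((p γ).1 : Set X)) γ ih)) with hfdef
  have hfeq : ∀ γ, f γ =
      Classical.epsilon (QSpec 𝒜 (((p γ).1 : Set X)) γ (fun δ _ => f δ)) :=
    fun γ => wf.fix_eq _ γ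
  have hQ : ∀ γ : ContW, QSpec 𝒜 (((p γ).1 : Set X)) γ (fun δ _ => f δ) (f γ) := by
    intro γ
    refine wf.induction (C := fun γ => QSpec 𝒜 (((p γ).1 : Set X)) γ (fun δ _ => f δ) (f γ))
      γ ?_
    intro γ IH
    rw [hfeq γ]
    refine Classical.epsilon_spec (p := QSpec 𝒜 (((p γ).1 : Set X)) γ (fun δ _ => f δ)) ?_
    -- existence of a valid choice at stage γ
    obtain ⟨hBb, hBI⟩ := (p γ).1.2
    set B : Set X := ((p γ).1 : Set X)
    set used : Set (Set X) := (fun δ : ContW => (f δ).1) '' (Iio γ) with husedDef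
    set forb : Set (Set X) := ⋃ δ : (Iio γ : Set ContW), {A' ∈ 𝒜 | (f δ.1).2.2 ∈ A'}
      with hforbDef
    have husedI : used ⊆ I := by
      rintro S ⟨δ, hδ, rfl⟩
      exact h𝒜 (IH δ hδ).1
    have hforbI : forb ⊆ I := by
      rintro S hS
      obtain ⟨δ, hSδ⟩ := mem_iUnion.mp hS
      exact h𝒜 hSδ.1
    have hIioCard : #(Iio γ : Set ContW) < Cardinal.continuum := Cardinal.mk_Iio_ord_toType γ
    have husedCard : #↥used < Cardinal.continuum := Cardinal.mk_image_le.trans_lt hIioCard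
    have hforbCard : #↥forb < Cardinal.continuum := by
      rw [hforbDef]
      refine (Cardinal.card_iUnion_lt_iff_forall_of_isRegular (ι := ↥(Iio γ : Set ContW))
        (t := fun δ => {A' ∈ 𝒜 | (f δ.1).2.2 ∈ A'}) hreg0 hIioCard).mpr ?_
      intro δ
      exact hsmall (f δ.1).2.2
    have h𝒞I : used ∪ forb ⊆ I := union_subset husedI hforbI
    have h𝒞card : #↥(used ∪ forb) < Cardinal.continuum :=
      (Cardinal.mk_union_le _ _).trans_lt
        (Cardinal.add_lt_of_lt aleph0_le_continuum husedCard hforbCard)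
    obtain ⟨x, hxB, hxU⟩ := hkey _ h𝒞I h𝒞card B hBb hBI
    have hx𝒜 : x ∈ ⋃₀ 𝒜 := by rw [hc]; trivial
    obtain ⟨A, hA𝒜, hxA⟩ := hx𝒜
    have h𝒞'I : insert A (used ∪ forb) ⊆ I := insert_subset (h𝒜 hA𝒜) h𝒞I
    have h𝒞'card : #↥(insert A (used ∪ forb)) < Cardinal.continuum := by
      refine (Cardinal.mk_insert_le).trans_lt ?_
      exact Cardinal.add_lt_of_lt aleph0_le_continuum h𝒞card
        (lt_of_lt_of_le one_lt_aleph0 aleph0_le_continuum)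
    obtain ⟨y, hyB, hyU⟩ := hkey _ h𝒞'I h𝒞'card B hBb hBI
    refine ⟨(A, x, y), hA𝒜, hxA, hxB, hyB, ?_, ?_⟩
    · exact fun hyA => hyU ⟨A, mem_insert _ _, hyA⟩
    · intro δ hδ
      refine ⟨?_, ?_, ?_⟩
      · exact fun hx' => hxU ⟨(f δ).1, Or.inl ⟨δ, hδ, rfl⟩, hx'⟩
      · exact fun hy' => hyU ⟨(f δ).1, mem_insert_of_mem _ (Or.inl ⟨δ, hδ, rfl⟩), hy'⟩
      · intro hyδ
        exact hxU ⟨A, Or.inr (mem_iUnion.mpr ⟨⟨δ, hδ⟩, ⟨hA𝒜, hyδ⟩⟩), hxA⟩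
  -- the families
  refine ⟨fun ξ => {S | ∃ γ : ContW, (p γ).2 = ξ ∧ (f γ).1 = S}, ?_, ?_, ?_⟩
  · rintro ξ S ⟨γ, -, rfl⟩
    exact (hQ γ).1
  · intro α β hab
    rw [Set.disjoint_left]
    rintro S ⟨γ, hγ, rfl⟩ ⟨δ, hδ, hEq⟩
    have hγδ : γ = δ := by
      rcases lt_trichotomy γ δ with h | h | h
      · exact absurd (hEq ▸ (hQ δ).2.1) (((hQ δ).2.2.2.2.2 γ h).1)
      · exact h
      · exact absurd (hEq.symm ▸ (hQ γ).2.1) (((hQ γ).2.2.2.2.2 δ h).1)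
    exact hab (by rw [← hγ, ← hδ, hγδ])
  · intro ξ B hBb hBI
    constructor
    · intro hcon
      obtain ⟨B', hB'b, hB'I, hB'B, hB'dis⟩ := hshrink B _ hBb hBI hcon
      obtain ⟨γ, hγ⟩ := hpsurj (⟨B', hB'b, hB'I⟩, ξ)
      have hx : (f γ).2.1 ∈ B' := by
        have h3 := (hQ γ).2.2.1
        rw [hγ] at h3
        exact h3
      refine hB'dis _ hx ⟨hB'B hx, ?_⟩
      exact ⟨(f γ).1, ⟨γ, by rw [hγ], rfl⟩, (hQ γ).2.1⟩
    · intro hcon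
      obtain ⟨B', hB'b, hB'I, hB'B, hB'dis⟩ := hshrink B _ hBb hBI hcon
      obtain ⟨γ, hγ⟩ := hpsurj (⟨B', hB'b, hB'I⟩, ξ)
      have hy : (f γ).2.2 ∈ B' := by
        have h4 := (hQ γ).2.2.2.1
        rw [hγ] at h4
        exact h4
      have hynot : (f γ).2.2 ∉ ⋃₀ {S | ∃ γ' : ContW, (p γ').2 = ξ ∧ (f γ').1 = S} := by
        rintro ⟨S, ⟨δ, -, rfl⟩, hyS⟩
        rcases lt_trichotomy δ γ with h | h | h
        · exact ((hQ γ).2.2.2.2.2 δ h).2.1 hyS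
        · subst h; exact (hQ δ).2.2.2.2.1 hyS
        · exact ((hQ δ).2.2.2.2.2 γ h).2.2 hyS
      exact hB'dis _ hy ⟨hB'B hy, mem_univ _, hynot⟩
end
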